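/- There exists a chiral partition of H, that is, a partition of the edge set of H into four perfect matchings such that each matching contains exactly one edge from each direction class D_i. -/

import Mathlib

open scoped Classical

noncomputable section

abbrev V4 := Fin 4 → ℝ

def cubeSet : Set V4 := {v | ∀ i, v i = 1 ∨ v i = -1}

abbrev CubeV := {v : V4 // v ∈ cubeSet}

/-- `v` and `w` differ in exactly the coordinate `i`. -/
def diffExactly {n : ℕ} (v w : Fin n → ℝ) (i : Fin n) : Prop := ∀ j, v j ≠ w j ↔ j = i

/-- `v` and `w` differ in exactly one coordinate. -/
def diffOne {n : ℕ} (v w : Fin n → ℝ) : Prop := ∃ i, diffExactly v w i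

instance antipodalSetoid : Setoid CubeV where
  r v w := (v : V4) = (w : V4) ∨ (v : V4) = -(w : V4)
  iseqv := by
    constructor
    · exact fun v => Or.inl rfl
    · rintro v w (h | h)
      · exact Or.inl h.symm
      · right; rw [h, neg_neg]
    · rintro u v w (h1 | h1) (h2 | h2)
      · exact Or.inl (h1.trans h2)
      · exact Or.inr (h1.trans h2)
      · right; rw [h1, h2]
      · left; rw [h1, h2, neg_neg]

/-- vertices of the hemi-hypercube: antipodal pairs of vertices of the hypercube -/
def HVert := Quotient antipodalSetoid

/-- the hemi-hypercube graph -/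
def H : SimpleGraph HVert where
  Adj x y := x ≠ y ∧ ∃ v w : CubeV, (⟦v⟧ : HVert) = x ∧ (⟦w⟧ : HVert) = y ∧
    diffOne (v : V4) (w : V4)
  symm := by
    constructor; rintro x y ⟨hxy, v, w, hv, hw, i, hi⟩
    exact ⟨hxy.symm, w, v, hw, hv, i, fun j => by rw [← hi j]; exact ne_comm⟩
  loopless := by constructor; rintro x ⟨h, -⟩; exact h rfl

/-- the direction class `D i` -/
def D (i : Fin 4) : Set (Sym2 HVert) :=
  {e | e ∈ H.edgeSet ∧ ∃ v w : CubeV,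
    e = s((⟦v⟧ : HVert), (⟦w⟧ : HVert)) ∧ diffExactly (v : V4) (w : V4) i}

/-- a set of edges of `G` is a perfect matching -/
def IsPM {V : Type*} (G : SimpleGraph V) (M : Set (Sym2 V)) : Prop :=
  M ⊆ G.edgeSet ∧ ∀ v : V, ∃! e : Sym2 V, e ∈ M ∧ v ∈ e

/-- a chiral partition of `H`: a partition of the edge set of `H` into four perfect
matchings, each containing exactly one edge from each direction class. -/
def IsChiralPartition (M : Fin 4 → Set (Sym2 HVert)) : Prop :=
  (∀ k, IsPM H (M k)) ∧
  (∀ e ∈ H.edgeSet, ∃! k, e ∈ M k) ∧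
  (∀ k i, ∃! e, e ∈ M k ∧ e ∈ D i)

/-!
Every edge of `H` joins an odd-weight class, which contains a unique unit vector `e_j`, to an
even-weight class, which we label `a` if it contains `e_0 + e_a` (and `0` for the class of
`(1,1,1,1)`). Reading `Fin 4` as GF(4) with addition `^^^`, the edge leaving `e_j` in direction `i`
ends at the even class `j + i`, so `H ≅ K_{4,4}`. The `k`-th matching uses at `e_j` the direction
`ω (j + k)`, where `ω` generates GF(4)ˣ. Each direction then occurs once in it, as `j ↦ ω (j + k)`
is bijective; each edge `(j, i)` lies only in the matching `k = j + ω⁻¹ i`; and the even endpoints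
`j + ω (j + k) = ω² (j + k) + k` are distinct because `1 + ω = ω²`.
-/

open Function

instance decidableExistsUniqueFintype {α : Type*} [Fintype α] [DecidableEq α] (p : α → Prop)
    [DecidablePred p] : Decidable (∃! a, p a) :=
  decidable_of_iff (∃ a, p a ∧ ∀ b, p b → b = a) Iff.rfl

lemma Function.Injective.existsUnique_mem_range_and_iff {ι α : Type*} {f : ι → α}
    (hf : Injective f) {p : α → Prop} : (∃! a, a ∈ Set.range f ∧ p a) ↔ ∃! i, p (f i) := by
  constructor
  · rintro ⟨_, ⟨⟨i, rfl⟩, hi⟩, huniq⟩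
    exact ⟨i, hi, fun i' hi' => hf (huniq _ ⟨⟨i', rfl⟩, hi'⟩)⟩
  · rintro ⟨i, hi, huniq⟩
    refine ⟨f i, ⟨⟨i, rfl⟩, hi⟩, ?_⟩
    rintro _ ⟨⟨i', rfl⟩, hi'⟩
    rw [huniq i' hi']

section SignVectors

variable {n : ℕ}

def signVec (b : Fin n → Bool) : Fin n → ℝ := fun i => if b i then 1 else -1

lemma signVec_ne_signVec_iff (b c : Fin n → Bool) (j : Fin n) :
    signVec b j ≠ signVec c j ↔ b j ≠ c j := by
  cases hb : b j <;> cases hc : c j <;> norm_num [signVec, hb, hc]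

lemma signVec_injective : Injective (signVec (n := n)) := fun b c h =>
  funext fun j => not_not.mp fun hj => (signVec_ne_signVec_iff b c j).mpr hj (congrFun h j)

lemma signVec_compl (b : Fin n → Bool) : signVec bᶜ = -signVec b := by
  funext j; cases h : b j <;> simp [signVec, h]

def flipAt (i : Fin n) (b : Fin n → Bool) : Fin n → Bool := update b i (!b i)

lemma diffExactly_signVec_iff {b c : Fin n → Bool} {i : Fin n} :
    diffExactly (signVec b) (signVec c) i ↔ c = flipAt i b := by
  simp only [diffExactly, signVec_ne_signVec_iff, funext_iff, flipAt]
  refine forall_congr' fun j => ?_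
  rcases eq_or_ne j i with rfl | hji
  · cases b j <;> cases c j <;> simp
  · simp [hji, eq_comm]

end SignVectors

lemma signVec_mem_cubeSet (b : Fin 4 → Bool) : signVec b ∈ cubeSet := fun i => by
  unfold signVec; split_ifs <;> simp

lemma exists_signVec_eq {v : V4} (hv : v ∈ cubeSet) : ∃ b, signVec b = v :=
  ⟨fun i => decide (v i = 1), funext fun i => by rcases hv i with h | h <;> norm_num [signVec, h]⟩

def cubeVertex (b : Fin 4 → Bool) : CubeV := ⟨signVec b, signVec_mem_cubeSet b⟩

lemma cubeVertex_surjective : Surjective cubeVertex := fun v =>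
  (exists_signVec_eq v.2).imp fun _ hb => Subtype.ext hb

def vertex (b : Fin 4 → Bool) : HVert := ⟦cubeVertex b⟧

lemma vertex_surjective : Surjective vertex :=
  Quotient.ind fun v => (cubeVertex_surjective v).imp fun _ hb => congrArg _ hb

lemma vertex_eq_vertex_iff {b c : Fin 4 → Bool} : vertex b = vertex c ↔ c = b ∨ c = bᶜ := by
  refine Quotient.eq.trans ?_
  show signVec b = signVec c ∨ signVec b = -signVec c ↔ _
  rw [← signVec_compl, signVec_injective.eq_iff, signVec_injective.eq_iff, eq_comm (a := b),
    eq_compl_comm]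

lemma mk_vertex_eq_mk_vertex_iff {a b c d : Fin 4 → Bool} :
    s(vertex a, vertex b) = s(vertex c, vertex d) ↔
      ((c = a ∨ c = aᶜ) ∧ (d = b ∨ d = bᶜ)) ∨ ((d = a ∨ d = aᶜ) ∧ (c = b ∨ c = bᶜ)) := by
  simp only [Sym2.eq_iff, vertex_eq_vertex_iff]

lemma vertex_mem_mk_vertex_iff {a b c : Fin 4 → Bool} :
    vertex a ∈ s(vertex b, vertex c) ↔ (b = a ∨ b = aᶜ) ∨ (c = a ∨ c = aᶜ) := by
  simp only [Sym2.mem_iff, vertex_eq_vertex_iff]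

lemma adj_vertex_flipAt (i : Fin 4) (b : Fin 4 → Bool) :
    H.Adj (vertex b) (vertex (flipAt i b)) := by
  refine ⟨?_, _, _, rfl, rfl, i, diffExactly_signVec_iff.mpr rfl⟩
  rw [Ne, vertex_eq_vertex_iff]
  revert i b
  decide

lemma mem_D_iff {e : Sym2 HVert} {i : Fin 4} :
    e ∈ D i ↔ ∃ b, e = s(vertex b, vertex (flipAt i b)) := by
  constructor
  · rintro ⟨-, v, w, rfl, hvw⟩
    obtain ⟨b, rfl⟩ := cubeVertex_surjective v
    obtain ⟨c, rfl⟩ := cubeVertex_surjective w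
    obtain rfl : c = flipAt i b := diffExactly_signVec_iff.mp hvw
    exact ⟨b, rfl⟩
  · rintro ⟨b, rfl⟩
    exact ⟨adj_vertex_flipAt i b, _, _, rfl, diffExactly_signVec_iff.mpr rfl⟩

lemma exists_mem_D_of_mem_edgeSet {e : Sym2 HVert} (he : e ∈ H.edgeSet) : ∃ i, e ∈ D i := by
  induction e using Sym2.ind with
  | _ x y =>
    obtain ⟨-, v, w, rfl, rfl, i, hi⟩ := id he
    exact ⟨i, he, v, w, rfl, hi⟩

def unitEdge (j i : Fin 4) : Sym2 HVert :=
  s(vertex (Pi.single j true), vertex (flipAt i (Pi.single j true)))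

lemma unitEdge_eq_unitEdge_iff {j i j' i' : Fin 4} :
    unitEdge j i = unitEdge j' i' ↔ j = j' ∧ i = i' := by
  rw [unitEdge, unitEdge, mk_vertex_eq_mk_vertex_iff]
  revert j i j' i'
  decide

lemma exists_unitEdge_eq (i : Fin 4) (b : Fin 4 → Bool) :
    ∃ j, s(vertex b, vertex (flipAt i b)) = unitEdge j i := by
  simp only [unitEdge, mk_vertex_eq_mk_vertex_iff]
  revert i b
  decide

lemma mem_D_iff_exists_unitEdge {e : Sym2 HVert} {i : Fin 4} :
    e ∈ D i ↔ ∃ j, e = unitEdge j i := by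
  rw [mem_D_iff]
  constructor
  · rintro ⟨b, rfl⟩
    exact exists_unitEdge_eq i b
  · rintro ⟨j, rfl⟩
    exact ⟨_, rfl⟩

lemma unitEdge_mem_D_iff {j i i' : Fin 4} : unitEdge j i ∈ D i' ↔ i = i' := by
  rw [mem_D_iff_exists_unitEdge]
  constructor
  · rintro ⟨j', h⟩
    exact (unitEdge_eq_unitEdge_iff.mp h).2
  · rintro rfl
    exact ⟨j, rfl⟩

/-- Multiplication by a generator of GF(4)ˣ, reading `Fin 4` as GF(4) with addition `^^^`. -/
def ω : Fin 4 → Fin 4 := ![0, 2, 3, 1]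

def chiralDir (k j : Fin 4) : Fin 4 := ω (j ^^^ k)

def chiralMatching (k : Fin 4) : Set (Sym2 HVert) :=
  Set.range fun j => unitEdge j (chiralDir k j)

lemma existsUnique_index_chiralDir_eq (j i : Fin 4) : ∃! k, chiralDir k j = i := by
  revert j i
  decide

lemma existsUnique_chiralDir_eq (k i : Fin 4) : ∃! j, chiralDir k j = i := by
  revert k i
  decide

lemma existsUnique_vertex_mem_unitEdge_chiralDir (k : Fin 4) (b : Fin 4 → Bool) :
    ∃! j, vertex b ∈ unitEdge j (chiralDir k j) := by
  simp only [unitEdge, vertex_mem_mk_vertex_iff]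
  revert k b
  decide

lemma injective_unitEdge_chiralDir (k : Fin 4) : Injective fun j => unitEdge j (chiralDir k j) :=
  fun _ _ h => (unitEdge_eq_unitEdge_iff.mp h).1

lemma unitEdge_mem_chiralMatching_iff {k j i : Fin 4} :
    unitEdge j i ∈ chiralMatching k ↔ chiralDir k j = i := by
  constructor
  · rintro ⟨j', h⟩
    obtain ⟨rfl, hi⟩ := unitEdge_eq_unitEdge_iff.mp h
    exact hi
  · rintro rfl
    exact ⟨j, rfl⟩

lemma chiralMatching_isPM (k : Fin 4) : IsPM H (chiralMatching k) := by
  refine ⟨?_, vertex_surjective.forall.mpr fun b => ?_⟩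
  · rintro _ ⟨j, rfl⟩
    exact (unitEdge_mem_D_iff.mpr rfl).1
  · rw [chiralMatching, (injective_unitEdge_chiralDir k).existsUnique_mem_range_and_iff]
    exact existsUnique_vertex_mem_unitEdge_chiralDir k b

lemma existsUnique_mem_chiralMatching {e : Sym2 HVert} (he : e ∈ H.edgeSet) :
    ∃! k, e ∈ chiralMatching k := by
  obtain ⟨i, hi⟩ := exists_mem_D_of_mem_edgeSet he
  obtain ⟨j, rfl⟩ := mem_D_iff_exists_unitEdge.mp hi
  simpa only [unitEdge_mem_chiralMatching_iff] using existsUnique_index_chiralDir_eq j i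

lemma existsUnique_mem_chiralMatching_mem_D (k i : Fin 4) :
    ∃! e, e ∈ chiralMatching k ∧ e ∈ D i := by
  rw [chiralMatching, (injective_unitEdge_chiralDir k).existsUnique_mem_range_and_iff]
  simpa only [unitEdge_mem_D_iff] using existsUnique_chiralDir_eq k i

/-- there exists a chiral partition of `H`. -/
theorem stmt_6 : ∃ M : Fin 4 → Set (Sym2 HVert), IsChiralPartition M :=
  ⟨chiralMatching, chiralMatching_isPM, fun _ => existsUnique_mem_chiralMatching,
    existsUnique_mem_chiralMatching_mem_D⟩
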